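/- Let F : C ⥤ X be a faithful essential localization, and assume that every pullback stable essential monomorphism in X is an isomorphism and that X is balanced. Then a morphism m in C is a pullback stable essential monomorphism if and only if m is a bimorphism (both a monomorphism and an epimorphism). -/

import Mathlib

open CategoryTheory Limits

/-- A morphism `m` is an essential monomorphism if it is a monomorphism and every
morphism `f` such that `m ≫ f` is a monomorphism is itself a monomorphism. -/
def IsEssentialMono {C : Type*} [CategoryTheory.Category C] {S A : C} (m : S ⟶ A) : Prop :=
  CategoryTheory.Mono m ∧
    ∀ ⦃B : C⦄ (f : A ⟶ B), CategoryTheory.Mono (m ≫ f) → CategoryTheory.Mono f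

/-- A morphism `m : S ⟶ A` is a pullback stable essential monomorphism if for every
morphism `u : X ⟶ A` the pullback projection `S ×_A X ⟶ X` of `m` along `u` is an
essential monomorphism. -/
def IsStableEssentialMono {C : Type*} [CategoryTheory.Category C]
    [CategoryTheory.Limits.HasPullbacks C] {S A : C} (m : S ⟶ A) : Prop :=
  ∀ ⦃X : C⦄ (u : X ⟶ A), IsEssentialMono (CategoryTheory.Limits.pullback.snd m u)

/-! Since `G` is fully faithful, the unit of `H ⊣ F` is invertible, so every morphism `u` into
`F.obj A` factors as an isomorphism followed by `F.map v`, and the pullback of `F.map m` along `u`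
is, up to isomorphism, the image of the pullback of `m` along `v`. As the right adjoint `F` is
faithful, it therefore carries stable essential monos to stable essential monos, which are
invertible in `X`; and faithful functors reflect monos and epis. Conversely, if `m` is a
bimorphism then `F.map m` is invertible because `X` is balanced, and a morphism inverted by a
faithful pullback-preserving functor is a stable essential mono. -/

namespace CategoryTheory

variable {C : Type*} [Category C] {X : Type*} [Category X]

theorem IsEssentialMono.isIso_comp {T S A : C} {e : T ⟶ S} [IsIso e] {m : S ⟶ A}
    (hm : IsEssentialMono m) : IsEssentialMono (e ≫ m) := by
  have := hm.1
  refine ⟨mono_comp e m, fun B f hf => hm.2 f ?_⟩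
  simpa using mono_comp (inv e) ((e ≫ m) ≫ f)

theorem isEssentialMono_pullback_snd_of_isPullback [HasPullbacks C] {P S A Y : C}
    {fst : P ⟶ S} {snd : P ⟶ Y} {m : S ⟶ A} {u : Y ⟶ A} (h : IsPullback fst snd m u)
    (hsnd : IsEssentialMono snd) : IsEssentialMono (pullback.snd m u) :=
  h.isoPullback_inv_snd ▸ hsnd.isIso_comp

theorem isEssentialMono_of_isIso_map (F : C ⥤ X) [F.Faithful] [F.PreservesMonomorphisms]
    {S A : C} (m : S ⟶ A) [IsIso (F.map m)] : IsEssentialMono m :=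
  ⟨F.mono_of_mono_map inferInstance, fun _ f _ => F.mono_of_mono_map <| by
    simpa using mono_comp (inv (F.map m)) (F.map (m ≫ f))⟩

theorem isStableEssentialMono_of_isIso_map [HasPullbacks C] (F : C ⥤ X) [F.Faithful]
    [PreservesLimitsOfShape WalkingCospan F] {S A : C} (m : S ⟶ A) [IsIso (F.map m)] :
    IsStableEssentialMono m := fun _ u =>
  have := ((IsPullback.of_hasPullback m u).map F).isIso_snd_of_isIso
  isEssentialMono_of_isIso_map F _

section EssentialLocalization

variable {F : C ⥤ X} {H : X ⥤ C} [F.Faithful]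

theorem IsEssentialMono.map_comp_inv_unit (adj : H ⊣ F) [IsIso adj.unit] {P : C} {Y : X}
    {q : P ⟶ H.obj Y} (hq : IsEssentialMono q) :
    IsEssentialMono (F.map q ≫ inv (adj.unit.app Y)) := by
  have := adj.isRightAdjoint
  have := hq.1
  refine ⟨inferInstance, fun B f hf => ?_⟩
  have hnat : f ≫ adj.unit.app B = adj.unit.app Y ≫ F.map (H.map f) := adj.unit.naturality f
  have : Mono (q ≫ H.map f) := F.mono_of_mono_map <| by
    have : F.map (q ≫ H.map f) = ((F.map q ≫ inv (adj.unit.app Y)) ≫ f) ≫ adj.unit.app B := by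
      rw [F.map_comp, Category.assoc, Category.assoc, hnat, IsIso.inv_hom_id_assoc]
    rw [this]
    infer_instance
  have : Mono (adj.unit.app Y ≫ F.map (H.map f)) := by
    have := hq.2 _ this
    infer_instance
  rw [← hnat] at this
  exact mono_of_mono f (adj.unit.app B)

theorem IsStableEssentialMono.map [HasPullbacks C] [HasPullbacks X] (adj : H ⊣ F)
    [IsIso adj.unit] {S A : C} {m : S ⟶ A} (hm : IsStableEssentialMono m) :
    IsStableEssentialMono (F.map m) := by
  have := adj.isRightAdjoint
  intro Y u
  set v : H.obj Y ⟶ A := H.map u ≫ adj.counit.app A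
  have hu : adj.unit.app Y ≫ F.map v = u := (adj.unit_comp_map_eq_iff v u).2 rfl
  have hpb : IsPullback (F.map (pullback.fst m v)) (F.map (pullback.snd m v) ≫ inv (adj.unit.app Y))
      (F.map m) u :=
    ((IsPullback.of_hasPullback m v).map F).of_iso (Iso.refl _) (Iso.refl _)
      (asIso (adj.unit.app Y)).symm (Iso.refl _) (by simp) (by simp) (by simp) (by simp [← hu])
  exact isEssentialMono_pullback_snd_of_isPullback hpb ((hm v).map_comp_inv_unit adj)

end EssentialLocalization

end CategoryTheory

theorem stableEssentialMono_iff_bimorphism_general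
    {C : Type*} [Category C] {X : Type*} [Category X]
    [HasFiniteLimits C] [HasFiniteLimits X] [Balanced X]
    (F : C ⥤ X) (G : X ⥤ C) (H : X ⥤ C)
    (adj : F ⊣ G) [F.Faithful] [G.Full] [G.Faithful]
    (adj' : H ⊣ F)
    (hX : ∀ ⦃S A : X⦄ (n : S ⟶ A), IsStableEssentialMono n → IsIso n)
    {S A : C} (m : S ⟶ A) :
    IsStableEssentialMono m ↔ (Mono m ∧ Epi m) := by
  have : IsIso adj'.unit :=
    (Adjunction.Triple.isIso_unit_iff_isIso_counit ⟨adj', adj⟩).mpr inferInstance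
  have := adj.isLeftAdjoint
  have := adj'.isRightAdjoint
  constructor
  · intro hm
    have := hX _ (hm.map adj')
    exact ⟨F.mono_of_mono_map inferInstance, F.epi_of_epi_map inferInstance⟩
  · rintro ⟨_, _⟩
    have : IsIso (F.map m) := isIso_of_mono_of_epi _
    exact isStableEssentialMono_of_isIso_map F m

/-- Let `F : C ⥤ X` be a faithful essential localization such that every pullback stable
essential monomorphism in `X` is an isomorphism and `X` is balanced. Then a morphism `m`
in `C` is a pullback stable essential monomorphism if and only if it is a bimorphism. -/
theorem stableEssentialMono_iff_bimorphism
    {C : Type*} [Category C] {X : Type*} [Category X]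
    [HasFiniteLimits C] [HasFiniteLimits X] [Balanced X]
    (F : C ⥤ X) (G : X ⥤ C) (H : X ⥤ C)
    (adj : F ⊣ G) [PreservesFiniteLimits F] [F.Faithful] [G.Full] [G.Faithful]
    (adj' : H ⊣ F)
    (hX : ∀ ⦃S A : X⦄ (n : S ⟶ A), IsStableEssentialMono n → IsIso n)
    {S A : C} (m : S ⟶ A) :
    IsStableEssentialMono m ↔ (Mono m ∧ Epi m) :=
  stableEssentialMono_iff_bimorphism_general F G H adj adj' hX m
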